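/- arXiv:1311.4722 — 5 statements merged into one kernel-verified Lean document; each statement's English description precedes it below -/
import Mathlib

section
/- Let f satisfy condition (FC) and let Λ be a trace-preserving positive linear map between complex matrix algebras. Then for all positive semidefinite matrices ρ, σ, one has D_f^max(Λ(ρ)||Λ(σ)) ≤ D_f^max(ρ||σ). -/
open Matrix Filter MeasureTheory
open scoped Topology Classical ComplexOrder

noncomputable section

/-- Functional calculus for Hermitian matrices (junk value `0` for non-Hermitian input). -/
def matFun (f : ℝ → ℝ) {n : ℕ} (A : Matrix (Fin n) (Fin n) ℂ) : Matrix (Fin n) (Fin n) ℂ :=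
  if h : A.IsHermitian then
    (h.eigenvectorUnitary : Matrix (Fin n) (Fin n) ℂ) *
      Matrix.diagonal (fun i => (f (h.eigenvalues i) : ℂ)) *
      star (h.eigenvectorUnitary : Matrix (Fin n) (Fin n) ℂ)
  else 0

/-- Square root of a positive semidefinite matrix. -/
def sqrtm {n : ℕ} (A : Matrix (Fin n) (Fin n) ℂ) : Matrix (Fin n) (Fin n) ℂ :=
  matFun Real.sqrt A

/-- Square root of the Moore–Penrose inverse of a positive semidefinite matrix. -/
def pinvSqrt {n : ℕ} (A : Matrix (Fin n) (Fin n) ℂ) : Matrix (Fin n) (Fin n) ℂ :=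
  matFun (fun x => (Real.sqrt x)⁻¹) A

/-- Moore–Penrose inverse of a positive semidefinite matrix. -/
def mpinv {n : ℕ} (A : Matrix (Fin n) (Fin n) ℂ) : Matrix (Fin n) (Fin n) ℂ :=
  matFun (fun x => x⁻¹) A

/-- Orthogonal projection onto the support of a positive semidefinite matrix. -/
def suppProj {n : ℕ} (A : Matrix (Fin n) (Fin n) ℂ) : Matrix (Fin n) (Fin n) ℂ :=
  matFun (fun x => if x = 0 then 0 else 1) A

/-- Commutative Radon–Nikodym derivative `d(ρ,σ) = σ^{-1/2} ρ σ^{-1/2}`. -/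
def dRN {n : ℕ} (ρ σ : Matrix (Fin n) (Fin n) ℂ) : Matrix (Fin n) (Fin n) ℂ :=
  pinvSqrt σ * ρ * pinvSqrt σ

/-- `supp ρ ⊆ supp σ`. -/
def suppLE {n : ℕ} (ρ σ : Matrix (Fin n) (Fin n) ℂ) : Prop :=
  LinearMap.range ρ.mulVecLin ≤ LinearMap.range σ.mulVecLin

/-- Loewner order `A ≤ B`. -/
def LoewnerLE {n : ℕ} (A B : Matrix (Fin n) (Fin n) ℂ) : Prop :=
  (B - A).PosSemidef

/-- The convention `0 · f(γ/0) := lim_{ε↓0} ε f(γ/ε)` (as a limsup, so that it is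
always defined; for convex `f` the limit exists and coincides with it). -/
def zeroMulConv (f : ℝ → EReal) (γ : ℝ) : EReal :=
  Filter.limsup (fun ε : ℝ => (ε : EReal) * f (γ / ε)) (𝓝[>] (0 : ℝ))

/-- Lift of a real valued function to `EReal` values. -/
def toE (f : ℝ → ℝ) : ℝ → EReal := fun y => ((f y : ℝ) : EReal)

/-- Classical `f`-divergence `D_f(p‖q) = ∑_x q(x) f(p(x)/q(x))`, with the convention
`0 · f(γ/0) := lim_{ε↓0} ε f(γ/ε)`. -/
def DfFinset (f : ℝ → EReal) {α : Type*} (X : Finset α) (p q : α → ℝ) : EReal :=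
  ∑ x ∈ X, if q x = 0 then zeroMulConv f (p x) else (q x : EReal) * f (p x / q x)

/-- A reverse test of `(ρ, σ)`: trace-one positive semidefinite matrices `Γ x`
and nonnegative weights `p, q` with `∑ p x • Γ x = ρ` and `∑ q x • Γ x = σ`. -/
def IsReverseTest {n k : ℕ} (ρ σ : Matrix (Fin n) (Fin n) ℂ)
    (Γ : Fin k → Matrix (Fin n) (Fin n) ℂ) (p q : Fin k → ℝ) : Prop :=
  (∀ x, (Γ x).PosSemidef) ∧ (∀ x, (Γ x).trace = 1) ∧ (∀ x, 0 ≤ p x) ∧ (∀ x, 0 ≤ q x) ∧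
    ∑ x, (p x : ℂ) • Γ x = ρ ∧ ∑ x, (q x : ℂ) • Γ x = σ

/-- Maximal `f`-divergence: infimum of `D_f(p‖q)` over all reverse tests of `(ρ,σ)`. -/
def DfMax (f : ℝ → EReal) {n : ℕ} (ρ σ : Matrix (Fin n) (Fin n) ℂ) : EReal :=
  ⨅ (k : ℕ) (Γ : Fin k → Matrix (Fin n) (Fin n) ℂ) (p : Fin k → ℝ) (q : Fin k → ℝ)
    (_ : IsReverseTest ρ σ Γ p q), DfFinset f Finset.univ p q

/-- Condition (FC): `f` is a proper closed convex function on `[0,∞)` with values in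
`ℝ ∪ {+∞}` and `f 0 = 0`. -/
structure IsFC (f : ℝ → EReal) : Prop where
  zero : f 0 = 0
  ne_bot : ∀ y : ℝ, 0 ≤ y → f y ≠ ⊥
  convex : ∀ ⦃y z : ℝ⦄, 0 ≤ y → 0 ≤ z → ∀ ⦃t : ℝ⦄, 0 ≤ t → t ≤ 1 →
    f (t * y + (1 - t) * z) ≤ (t : EReal) * f y + ((1 - t : ℝ) : EReal) * f z
  lsc : LowerSemicontinuousOn f (Set.Ici 0)

/-- A density matrix: positive semidefinite with trace one. -/
def IsDensity {n : ℕ} (ρ : Matrix (Fin n) (Fin n) ℂ) : Prop :=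
  ρ.PosSemidef ∧ ρ.trace = 1

/-- Trace preserving positive linear map. -/
def IsTPP {n m : ℕ} (Λ : Matrix (Fin n) (Fin n) ℂ →ₗ[ℂ] Matrix (Fin m) (Fin m) ℂ) : Prop :=
  (∀ A : Matrix (Fin n) (Fin n) ℂ, A.PosSemidef → (Λ A).PosSemidef) ∧
  (∀ A : Matrix (Fin n) (Fin n) ℂ, (Λ A).trace = A.trace)

/-- CPTP map: trace preserving, and `Λ ⊗ id_k` is positive for every `k`. -/
def IsCPTP {n m : ℕ} (Λ : Matrix (Fin n) (Fin n) ℂ →ₗ[ℂ] Matrix (Fin m) (Fin m) ℂ) : Prop :=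
  (∀ A : Matrix (Fin n) (Fin n) ℂ, (Λ A).trace = A.trace) ∧
  ∀ (k : ℕ) (M : Matrix (Fin n × Fin k) (Fin n × Fin k) ℂ), M.PosSemidef →
    (Matrix.of (fun i j : Fin m × Fin k =>
      Λ (Matrix.of fun r s => M (r, i.2) (s, j.2)) i.1 j.1)).PosSemidef

/-- The map `Λ_σ(Z) = Λ(σ)^{-1/2} Λ(σ^{1/2} Z σ^{1/2}) Λ(σ)^{-1/2}`. -/
def lamSigma {n m : ℕ} (Λ : Matrix (Fin n) (Fin n) ℂ →ₗ[ℂ] Matrix (Fin m) (Fin m) ℂ)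
    (σ Z : Matrix (Fin n) (Fin n) ℂ) : Matrix (Fin m) (Fin m) ℂ :=
  pinvSqrt (Λ σ) * Λ (sqrtm σ * Z * sqrtm σ) * pinvSqrt (Λ σ)

/-- Condition (F): `f : [0,∞) → ℝ` continuous, `f 0 = 0`, operator convex. -/
def IsOpConvexF (f : ℝ → ℝ) : Prop :=
  ContinuousOn f (Set.Ici 0) ∧ f 0 = 0 ∧
  ∀ (k : ℕ) (A B : Matrix (Fin k) (Fin k) ℂ), A.PosSemidef → B.PosSemidef →
    ∀ t : ℝ, 0 ≤ t → t ≤ 1 →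
      LoewnerLE (matFun f (t • A + (1 - t) • B)) (t • matFun f A + (1 - t) • matFun f B)

/-- The quantity `D'_f(ρ‖σ)`. -/
def DfPrime (f : ℝ → ℝ) {n : ℕ} (ρ σ : Matrix (Fin n) (Fin n) ℂ) : EReal :=
  if suppLE ρ σ then ((((σ * matFun f (dRN ρ σ)).trace.re : ℝ)) : EReal)
  else sInf { D : EReal | ∃ ρ₁ : Matrix (Fin n) (Fin n) ℂ,
    ρ₁.PosSemidef ∧ LoewnerLE ρ₁ ρ ∧ suppLE ρ₁ σ ∧
    D = ((((σ * matFun f (dRN ρ₁ σ)).trace.re : ℝ)) : EReal)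
        + zeroMulConv (toE f) (1 - ρ₁.trace.re) }

/-- Spectral projection of a Hermitian matrix onto the eigenvalue `c`. -/
def eigProj {n : ℕ} (A : Matrix (Fin n) (Fin n) ℂ) (c : ℝ) : Matrix (Fin n) (Fin n) ℂ :=
  matFun (fun x => if x = c then 1 else 0) A

/-- The (real) spectrum of a Hermitian matrix. -/
def matSpec {n : ℕ} (A : Matrix (Fin n) (Fin n) ℂ) : Set ℝ := {c | eigProj A c ≠ 0}

/-- weights `q` of the minimal reverse test (dominated case): `q(x) = tr[σ P_x]`. -/
def mrtQ {n : ℕ} (ρ σ : Matrix (Fin n) (Fin n) ℂ) (c : ℝ) : ℝ :=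
  ((σ * eigProj (dRN ρ σ) c).trace).re

/-- weights `p` of the minimal reverse test (dominated case): `p(x) = d_x q(x)`. -/
def mrtP {n : ℕ} (ρ σ : Matrix (Fin n) (Fin n) ℂ) (c : ℝ) : ℝ := c * mrtQ ρ σ c

/-- states of the minimal reverse test (dominated case): `Γ_x = σ^{1/2} P_x σ^{1/2} / q(x)`. -/
def mrtGamma {n : ℕ} (ρ σ : Matrix (Fin n) (Fin n) ℂ) (c : ℝ) : Matrix (Fin n) (Fin n) ℂ :=
  (mrtQ ρ σ c)⁻¹ • (sqrtm σ * eigProj (dRN ρ σ) c * sqrtm σ)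

/-- index set of the minimal reverse test (dominated case): the distinct eigenvalues of
`d(ρ,σ)` carrying positive weight. -/
def mrtX {n : ℕ} (ρ σ : Matrix (Fin n) (Fin n) ℂ) : Finset ℝ :=
  if h : (dRN ρ σ).IsHermitian then
    (Finset.univ.image h.eigenvalues).filter (fun c => mrtQ ρ σ c ≠ 0)
  else ∅

/-- `ρ̃ = ρ₁₁ − ρ₁₂ ρ₂₂⁻ ρ₂₁` (blocks w.r.t. the support projection of `σ`). -/
def rhoTilde {n : ℕ} (ρ σ : Matrix (Fin n) (Fin n) ℂ) : Matrix (Fin n) (Fin n) ℂ :=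
  suppProj σ * ρ * suppProj σ -
    (suppProj σ * ρ * (1 - suppProj σ)) *
      mpinv ((1 - suppProj σ) * ρ * (1 - suppProj σ)) *
        ((1 - suppProj σ) * ρ * suppProj σ)

/-- `ρ` itself if `supp ρ ⊆ supp σ`, and `ρ̃` otherwise. -/
def domPart {n : ℕ} (ρ σ : Matrix (Fin n) (Fin n) ℂ) : Matrix (Fin n) (Fin n) ℂ :=
  if suppLE ρ σ then ρ else rhoTilde ρ σ

/-- Index set of the minimal reverse test of `(ρ,σ)` (general case); the extra point
`x₀` is encoded as `none`. -/
def mrtXO {n : ℕ} (ρ σ : Matrix (Fin n) (Fin n) ℂ) : Finset (Option ℝ) :=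
  if suppLE ρ σ then (mrtX ρ σ).image some
  else insert none ((mrtX (rhoTilde ρ σ) σ).image some)

/-- weights `q` of the minimal reverse test (general case). -/
def mrtQO {n : ℕ} (ρ σ : Matrix (Fin n) (Fin n) ℂ) : Option ℝ → ℝ
  | none => 0
  | some c => mrtQ (domPart ρ σ) σ c

/-- weights `p` of the minimal reverse test (general case). -/
def mrtPO {n : ℕ} (ρ σ : Matrix (Fin n) (Fin n) ℂ) : Option ℝ → ℝ
  | none => 1 - ((rhoTilde ρ σ).trace).re
  | some c => mrtP (domPart ρ σ) σ c

/-- states of the minimal reverse test (general case). -/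
def mrtGammaO {n : ℕ} (ρ σ : Matrix (Fin n) (Fin n) ℂ) :
    Option ℝ → Matrix (Fin n) (Fin n) ℂ
  | none => ((1 - ((rhoTilde ρ σ).trace).re)⁻¹ : ℝ) • (ρ - rhoTilde ρ σ)
  | some c => mrtGamma (domPart ρ σ) σ c

/-- The recession slope `lim_{y→∞} f(y)/y` of a convex function (as a limsup). -/
def recSlope (f : ℝ → ℝ) : EReal :=
  Filter.limsup (fun y : ℝ => ((f y / y : ℝ) : EReal)) atTop

/-- Support of a Borel measure on `ℝ`. -/
def measSupp (μ : Measure ℝ) : Set ℝ :=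
  {t | ∀ ε : ℝ, 0 < ε → 0 < μ (Set.Ioo (t - ε) (t + ε))}

/-- Löwner representation of an operator convex function:
`f(y) = a y + b y² + ∫ (y/(1+t) − y/(y+t)) dμ(t)` with `b ≥ 0` and `μ` a nonnegative
Borel measure on `(0,∞)` with `∫ (1+t)⁻² dμ(t) < ∞`. -/
def IsLownerRep (f : ℝ → ℝ) (a b : ℝ) (μ : Measure ℝ) : Prop :=
  0 ≤ b ∧ μ (Set.Iic 0) = 0 ∧ Integrable (fun t : ℝ => ((1 + t) ^ 2)⁻¹) μ ∧
    ∀ y : ℝ, 0 ≤ y → f y = a * y + b * y ^ 2 + ∫ t, (y / (1 + t) - y / (y + t)) ∂μ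


/-- monotonicity of the maximal `f`-divergence under trace preserving
positive maps, for `f` satisfying (FC). -/
theorem stmt0 {n m : ℕ} (f : ℝ → EReal) (hf : IsFC f)
    (Λ : Matrix (Fin n) (Fin n) ℂ →ₗ[ℂ] Matrix (Fin m) (Fin m) ℂ) (hΛ : IsTPP Λ)
    (ρ σ : Matrix (Fin n) (Fin n) ℂ) (hρ : ρ.PosSemidef) (hσ : σ.PosSemidef) :
    DfMax f (Λ ρ) (Λ σ) ≤ DfMax f ρ σ := by
  refine le_iInf fun k => le_iInf fun Γ => le_iInf fun p => le_iInf fun q => le_iInf fun hrt => ?_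
  refine iInf_le_of_le k (iInf_le_of_le (fun x => Λ (Γ x)) (iInf_le_of_le p
    (iInf_le_of_le q (iInf_le_of_le ?_ le_rfl))))
  obtain ⟨h1, h2, h3, h4, h5, h6⟩ := hrt
  refine ⟨fun x => hΛ.1 _ (h1 x), fun x => (hΛ.2 _).trans (h2 x), h3, h4, ?_, ?_⟩
  · rw [← h5, map_sum]; simp [_root_.map_smul]
  · rw [← h6, map_sum]; simp [_root_.map_smul]
end
end

section
/- Fix f satisfying condition (FC). Suppose D^Q assigns to every pair of density matrices on every finite-dimensional complex Hilbert space an element of (−∞,+∞] such that (D1) D^Q(Λ(ρ)||Λ(σ)) ≤ D^Q(ρ||σ) for every CPTP map Λ and all density matrices ρ, σ, and (D2) D^Q(∑_x p(x)|e_x⟩⟨e_x| || ∑_x q(x)|e_x⟩⟨e_x|) = D_f(p||q) for all probability distributions p, q on finite sets and all orthonormal bases (e_x). Then D^Q(ρ||σ) ≤ D_f^max(ρ||σ) for all density matrices ρ, σ. -/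
open Matrix Filter MeasureTheory
open scoped Topology Classical ComplexOrder

noncomputable section

/-! ### Auxiliary material for `stmt2` -/

/-- The "measure-and-prepare" map associated to a family of states `Γ`:
`M ↦ ∑ x, M x x • Γ x`. -/
def rtMap {n k : ℕ} (Γ : Fin k → Matrix (Fin n) (Fin n) ℂ) :
    Matrix (Fin k) (Fin k) ℂ →ₗ[ℂ] Matrix (Fin n) (Fin n) ℂ where
  toFun M := ∑ x, M x x • Γ x
  map_add' M N := by simp [Matrix.add_apply, add_smul, Finset.sum_add_distrib]
  map_smul' c M := by simp [Matrix.smul_apply, smul_smul, Finset.smul_sum]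

open scoped MatrixOrder in
lemma posSemidef_exists_conjTranspose_mul_self {m : Type*} [Fintype m] [DecidableEq m]
    {A : Matrix m m ℂ} (hA : A.PosSemidef) : ∃ B : Matrix m m ℂ, A = Bᴴ * B := by
  obtain ⟨X, hX, -, hXA⟩ :=
    CFC.exists_sqrt_of_isSelfAdjoint_of_quasispectrumRestricts hA.isHermitian
      (QuasispectrumRestricts.nnreal_of_nonneg hA.nonneg)
  refine ⟨X, ?_⟩
  rw [← hXA, ← star_eq_conjTranspose, hX.star_eq]

lemma rtMap_isCPTP {n k : ℕ} (Γ : Fin k → Matrix (Fin n) (Fin n) ℂ)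
    (hΓ : ∀ x, (Γ x).PosSemidef) (htr : ∀ x, (Γ x).trace = 1) :
    IsCPTP (rtMap Γ) := by
  constructor
  · intro M
    show (∑ x, M x x • Γ x).trace = M.trace
    rw [Matrix.trace_sum, Matrix.trace]
    exact Finset.sum_congr rfl fun x _ => by
      rw [Matrix.trace_smul, htr x, smul_eq_mul, mul_one, Matrix.diag]
  · intro j M hM
    obtain ⟨D, hD⟩ := posSemidef_exists_conjTranspose_mul_self hM
    choose C hC using fun x => posSemidef_exists_conjTranspose_mul_self (hΓ x)
    set E : Fin k → Matrix ((Fin k × Fin j) × Fin n) (Fin n × Fin j) ℂ :=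
      fun x => Matrix.of fun ml cd => D ml.1 (x, cd.2) * C x ml.2 cd.1 with hE
    have key : (Matrix.of (fun i j' : Fin n × Fin j =>
        rtMap Γ (Matrix.of fun r s => M (r, i.2) (s, j'.2)) i.1 j'.1))
        = ∑ x, (E x)ᴴ * (E x) := by
      ext ⟨a, b⟩ ⟨c, d⟩
      rw [Matrix.sum_apply]
      show rtMap Γ (Matrix.of fun r s => M (r, b) (s, d)) a c = _
      rw [show rtMap Γ (Matrix.of fun r s => M (r, b) (s, d))
          = ∑ x, M (x, b) (x, d) • Γ x from rfl, Matrix.sum_apply]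
      refine Finset.sum_congr rfl fun x _ => ?_
      have hl : M (x, b) (x, d) * Γ x a c
          = (∑ m, (starRingEnd ℂ) (D m (x, b)) * D m (x, d))
            * (∑ l, (starRingEnd ℂ) (C x l a) * C x l c) := by
        rw [hD, hC x, Matrix.mul_apply, Matrix.mul_apply]
        simp only [Matrix.conjTranspose_apply, RCLike.star_def]
      simp only [Matrix.smul_apply, smul_eq_mul]
      rw [hl, Matrix.mul_apply]
      conv_rhs => rw [Fintype.sum_prod_type]
      rw [Finset.sum_mul_sum]
      refine Finset.sum_congr rfl fun m _ => Finset.sum_congr rfl fun l _ => ?_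
      simp only [Matrix.conjTranspose_apply, hE, Matrix.of_apply, star_mul', RCLike.star_def]
      ring
    rw [key]
    exact Finset.sum_induction _ _ (fun A B hA hB => hA.add hB) Matrix.PosSemidef.zero
      (fun x _ => Matrix.posSemidef_conjTranspose_mul_self (E x))

lemma basis_sum_eq_diagonal {k : ℕ} (p : Fin k → ℝ) :
    (∑ x, (p x : ℂ) • Matrix.vecMulVec
        (fun i => (EuclideanSpace.basisFun (Fin k) ℂ) x i)
        (fun j => starRingEnd ℂ ((EuclideanSpace.basisFun (Fin k) ℂ) x j)))
      = Matrix.diagonal (fun i => (p i : ℂ)) := by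
  ext i j
  rw [Matrix.sum_apply]
  simp only [Matrix.smul_apply, Matrix.vecMulVec_apply, EuclideanSpace.basisFun_apply,
    EuclideanSpace.single_apply, smul_eq_mul, apply_ite (starRingEnd ℂ), _root_.map_one,
    _root_.map_zero]
  rw [Finset.sum_eq_single i]
  · by_cases h : i = j
    · simp [Matrix.diagonal, h]
    · simp only [Matrix.diagonal, Matrix.of_apply, if_neg h]
      rw [if_neg (fun hji : j = i => h hji.symm)]
      simp
  · intro b _ hb
    simp [Ne.symm hb]
  · simp

lemma rtMap_diagonal {n k : ℕ} (Γ : Fin k → Matrix (Fin n) (Fin n) ℂ) (v : Fin k → ℂ) :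
    rtMap Γ (Matrix.diagonal v) = ∑ x, v x • Γ x := by
  show (∑ x, Matrix.diagonal v x x • Γ x) = _
  simp [Matrix.diagonal]

lemma diagonal_isDensity {k : ℕ} (p : Fin k → ℝ) (hp : ∀ x, 0 ≤ p x) (hps : ∑ x, p x = 1) :
    IsDensity (Matrix.diagonal (fun i => (p i : ℂ))) := by
  constructor
  · refine Matrix.posSemidef_diagonal_iff.mpr fun i => ?_
    exact_mod_cast Complex.zero_le_real.mpr (hp i)
  · rw [Matrix.trace_diagonal]
    exact_mod_cast hps


/-- `D_f^max` is the largest quantum extension of the classical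
`f`-divergence satisfying monotonicity (D1) under CPTP maps and normalization (D2). -/
theorem stmt2 (f : ℝ → EReal) (hf : IsFC f)
    (DQ : ∀ n : ℕ, Matrix (Fin n) (Fin n) ℂ → Matrix (Fin n) (Fin n) ℂ → EReal)
    (hbot : ∀ (n : ℕ) (ρ σ : Matrix (Fin n) (Fin n) ℂ),
      IsDensity ρ → IsDensity σ → DQ n ρ σ ≠ ⊥)
    (hD1 : ∀ (n m : ℕ) (Λ : Matrix (Fin n) (Fin n) ℂ →ₗ[ℂ] Matrix (Fin m) (Fin m) ℂ),
      IsCPTP Λ → ∀ ρ σ : Matrix (Fin n) (Fin n) ℂ, IsDensity ρ → IsDensity σ →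
        DQ m (Λ ρ) (Λ σ) ≤ DQ n ρ σ)
    (hD2 : ∀ (n : ℕ) (ι : Type) (_ : Fintype ι) (p q : ι → ℝ),
      (∀ x, 0 ≤ p x) → ∑ x, p x = 1 → (∀ x, 0 ≤ q x) → ∑ x, q x = 1 →
      ∀ e : OrthonormalBasis ι ℂ (EuclideanSpace ℂ (Fin n)),
        DQ n
          (∑ x, (p x : ℂ) • Matrix.vecMulVec (fun i => e x i) (fun j => starRingEnd ℂ (e x j)))
          (∑ x, (q x : ℂ) • Matrix.vecMulVec (fun i => e x i) (fun j => starRingEnd ℂ (e x j)))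
          = DfFinset f Finset.univ p q)
    {n : ℕ} (ρ σ : Matrix (Fin n) (Fin n) ℂ) (hρ : IsDensity ρ) (hσ : IsDensity σ) :
    DQ n ρ σ ≤ DfMax f ρ σ := by
  refine le_iInf fun k => le_iInf fun Γ => le_iInf fun p => le_iInf fun q =>
    le_iInf fun hrt => ?_
  obtain ⟨hΓpsd, hΓtr, hp, hq, hρeq, hσeq⟩ := hrt
  have hsum : ∀ (r : Fin k → ℝ) (τ : Matrix (Fin n) (Fin n) ℂ),
      (∑ x, (r x : ℂ) • Γ x) = τ → τ.trace = 1 → ∑ x, r x = 1 := by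
    intro r τ heq htau
    have h1 : (∑ x, (r x : ℂ) • Γ x).trace = 1 := by rw [heq, htau]
    rw [Matrix.trace_sum] at h1
    have h2 : (∑ x, ((r x : ℂ))) = 1 := by
      rw [← h1]
      exact Finset.sum_congr rfl fun x _ => by
        rw [Matrix.trace_smul, hΓtr x, smul_eq_mul, mul_one]
    exact_mod_cast h2
  have hps : ∑ x, p x = 1 := hsum p ρ hρeq hρ.2
  have hqs : ∑ x, q x = 1 := hsum q σ hσeq hσ.2
  have hDp := basis_sum_eq_diagonal p
  have hDq := basis_sum_eq_diagonal q
  have hρ' : rtMap Γ (Matrix.diagonal (fun i => (p i : ℂ))) = ρ := by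
    rw [rtMap_diagonal]; exact hρeq
  have hσ' : rtMap Γ (Matrix.diagonal (fun i => (q i : ℂ))) = σ := by
    rw [rtMap_diagonal]; exact hσeq
  have hmono := hD1 k n (rtMap Γ) (rtMap_isCPTP Γ hΓpsd hΓtr)
    (Matrix.diagonal (fun i => (p i : ℂ))) (Matrix.diagonal (fun i => (q i : ℂ)))
    (diagonal_isDensity p hp hps) (diagonal_isDensity q hq hqs)
  rw [hρ', hσ'] at hmono
  have hnorm := hD2 k (Fin k) inferInstance p q hp hps hq hqs
    (EuclideanSpace.basisFun (Fin k) ℂ)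
  rw [hDp, hDq] at hnorm
  calc DQ n ρ σ ≤ DQ k (Matrix.diagonal (fun i => (p i : ℂ)))
        (Matrix.diagonal (fun i => (q i : ℂ))) := hmono
    _ = DfFinset f Finset.univ p q := hnorm

end
end

section
/- Let ρ, σ be positive semidefinite matrices with supp ρ ⊆ supp σ, and let (X,(Γ_x),p,q) be the minimal reverse test of (ρ,σ). Then each Γ_x is positive semidefinite of trace 1, ∑_{x∈X} p(x)Γ_x = ρ and ∑_{x∈X} q(x)Γ_x = σ (so it is a reverse test of (ρ,σ)); moreover, for every function f defined on the spectrum of d(ρ,σ), ∑_{x∈X} q(x) f(p(x)/q(x)) = tr[σ f(d(ρ,σ))], where f is applied to d(ρ,σ) by functional calculus. -/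
open Matrix Filter MeasureTheory
open scoped Topology Classical ComplexOrder

noncomputable section

section MyAux
variable {n : ℕ} {A : Matrix (Fin n) (Fin n) ℂ}

lemma matFun_eq (hA : A.IsHermitian) (g : ℝ → ℝ) :
    matFun g A = (hA.eigenvectorUnitary : Matrix (Fin n) (Fin n) ℂ) *
      Matrix.diagonal (fun i => (g (hA.eigenvalues i) : ℂ)) *
      star (hA.eigenvectorUnitary : Matrix (Fin n) (Fin n) ℂ) := dif_pos hA

lemma matFun_congr (hA : A.IsHermitian) {g g' : ℝ → ℝ}
    (h : ∀ i, g (hA.eigenvalues i) = g' (hA.eigenvalues i)) : matFun g A = matFun g' A := by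
  rw [matFun_eq hA, matFun_eq hA]
  have : (fun i => (g (hA.eigenvalues i) : ℂ)) = fun i => (g' (hA.eigenvalues i) : ℂ) := by
    funext i; rw [h i]
  rw [this]

lemma matFun_mul (hA : A.IsHermitian) (g g' : ℝ → ℝ) :
    matFun g A * matFun g' A = matFun (fun x => g x * g' x) A := by
  rw [matFun_eq hA, matFun_eq hA, matFun_eq hA]
  have h1 : star (hA.eigenvectorUnitary : Matrix (Fin n) (Fin n) ℂ) *
      (hA.eigenvectorUnitary : Matrix (Fin n) (Fin n) ℂ) = 1 :=
    Matrix.UnitaryGroup.star_mul_self _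
  simp only [mul_assoc]
  rw [← mul_assoc (star (hA.eigenvectorUnitary : Matrix (Fin n) (Fin n) ℂ))
    (hA.eigenvectorUnitary : Matrix (Fin n) (Fin n) ℂ), h1, one_mul,
    ← mul_assoc (Matrix.diagonal _) (Matrix.diagonal _), Matrix.diagonal_mul_diagonal]
  congr 1
  congr 1
  funext i
  push_cast
  ring

lemma matFun_id (hA : A.IsHermitian) : matFun (fun x => x) A = A := by
  rw [matFun_eq hA]; exact (hA.spectral_theorem).symm

lemma matFun_one (hA : A.IsHermitian) : matFun (fun _ => 1) A = 1 := by
  rw [matFun_eq hA]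
  simp only [Complex.ofReal_one, Matrix.diagonal_one, mul_one]
  exact (Matrix.mem_unitaryGroup_iff).mp (hA.eigenvectorUnitary).2

lemma matFun_isHermitian (hA : A.IsHermitian) (g : ℝ → ℝ) : (matFun g A).IsHermitian := by
  rw [matFun_eq hA]
  unfold Matrix.IsHermitian
  rw [conjTranspose_mul, conjTranspose_mul, Matrix.diagonal_conjTranspose]
  simp only [star_star, Matrix.star_eq_conjTranspose, Matrix.conjTranspose_conjTranspose,
    mul_assoc]
  have : (star fun i => (g (hA.eigenvalues i) : ℂ)) = fun i => (g (hA.eigenvalues i) : ℂ) := by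
    funext i
    simp [Pi.star_apply, Complex.conj_ofReal]
  rw [this]

lemma smul_matFun (hA : A.IsHermitian) (r : ℝ) (g : ℝ → ℝ) :
    (r : ℂ) • matFun g A = matFun (fun x => r * g x) A := by
  rw [matFun_eq hA, matFun_eq hA, ← Matrix.smul_mul, ← Matrix.mul_smul]
  congr 2
  ext i j
  simp only [Matrix.smul_apply, Matrix.diagonal_apply]
  split <;> push_cast <;> simp

lemma sum_smul_matFun (hA : A.IsHermitian) {α : Type*} (S : Finset α) (w : α → ℝ)
    (g : α → ℝ → ℝ) :
    ∑ c ∈ S, (w c : ℂ) • matFun (g c) A = matFun (fun x => ∑ c ∈ S, w c * g c x) A := by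
  classical
  induction S using Finset.induction_on with
  | empty => simp only [Finset.sum_empty]
             rw [matFun_eq hA]; simp
  | insert _ _ hx ih =>
      rw [Finset.sum_insert hx, ih, smul_matFun hA]
      rw [matFun_eq hA, matFun_eq hA, matFun_eq hA, ← Matrix.add_mul, ← Matrix.mul_add,
        Matrix.diagonal_add]
      congr 2
      funext i
      push_cast [Finset.sum_insert hx]
      ring

lemma realSmul (r : ℝ) (M : Matrix (Fin n) (Fin n) ℂ) : r • M = (r : ℂ) • M := by
  ext i j
  simp [Matrix.smul_apply, Complex.real_smul]

lemma traceBBH (B : Matrix (Fin n) (Fin n) ℂ) :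
    (B * Bᴴ).trace = ((∑ i, ∑ j, Complex.normSq (B i j) : ℝ) : ℂ) := by
  simp only [Matrix.trace, Matrix.diag, Matrix.mul_apply, Matrix.conjTranspose_apply,
    RCLike.star_def]
  push_cast
  congr 1
  funext i
  congr 1
  funext j
  rw [mul_comm, Complex.normSq_eq_conj_mul_self]

lemma BBH_eq_zero {B : Matrix (Fin n) (Fin n) ℂ} (h : ((B * Bᴴ).trace).re = 0) :
    B * Bᴴ = 0 := by
  have h2 : (∑ i, ∑ j, Complex.normSq (B i j) : ℝ) = 0 := by
    have := traceBBH B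
    rw [this] at h
    simpa using h
  have hB : B = 0 := by
    ext i j
    have h3 : ∀ i ∈ (Finset.univ : Finset (Fin n)),
        0 ≤ ∑ j, Complex.normSq (B i j) :=
      fun i _ => Finset.sum_nonneg fun j _ => Complex.normSq_nonneg _
    have h4 := (Finset.sum_eq_zero_iff_of_nonneg h3).mp h2 i (Finset.mem_univ i)
    have h5 := (Finset.sum_eq_zero_iff_of_nonneg
      (fun j _ => Complex.normSq_nonneg (B i j))).mp h4 j (Finset.mem_univ j)
    simpa using Complex.normSq_eq_zero.mp h5
  rw [hB, Matrix.zero_mul]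

end MyAux

/-- the minimal reverse test of `(ρ,σ)` (case `supp ρ ⊆ supp σ`) is a
reverse test, and its classical `f`-divergence data reproduces `tr[σ f(d(ρ,σ))]` for
every function `f`. -/
theorem stmt4 {n : ℕ} (ρ σ : Matrix (Fin n) (Fin n) ℂ)
    (hρ : ρ.PosSemidef) (hσ : σ.PosSemidef) (hsupp : suppLE ρ σ) :
    (∀ c ∈ mrtX ρ σ, (mrtGamma ρ σ c).PosSemidef ∧ (mrtGamma ρ σ c).trace = 1) ∧
    (∑ c ∈ mrtX ρ σ, (mrtP ρ σ c : ℂ) • mrtGamma ρ σ c) = ρ ∧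
    (∑ c ∈ mrtX ρ σ, (mrtQ ρ σ c : ℂ) • mrtGamma ρ σ c) = σ ∧
    (∀ f : ℝ → ℝ,
      ((∑ c ∈ mrtX ρ σ, mrtQ ρ σ c * f (mrtP ρ σ c / mrtQ ρ σ c) : ℝ) : ℂ)
        = (σ * matFun f (dRN ρ σ)).trace) := by
  classical
  have hσ1 : σ.IsHermitian := hσ.1
  have hρ1 : ρ.IsHermitian := hρ.1
  -- σ facts
  have hss : sqrtm σ * sqrtm σ = σ := by
    show matFun Real.sqrt σ * matFun Real.sqrt σ = σ
    rw [matFun_mul hσ1,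
      matFun_congr hσ1 (g' := fun x => x)
        (fun i => Real.mul_self_sqrt (hσ.eigenvalues_nonneg i)),
      matFun_id hσ1]
  have hst : sqrtm σ * pinvSqrt σ = suppProj σ := by
    show matFun Real.sqrt σ * matFun (fun x => (Real.sqrt x)⁻¹) σ
      = matFun (fun x => if x = 0 then 0 else 1) σ
    rw [matFun_mul hσ1]
    refine matFun_congr hσ1 fun i => ?_
    rcases (hσ.eigenvalues_nonneg i).lt_or_eq with h | h
    · have hne : Real.sqrt (hσ1.eigenvalues i) ≠ 0 := ne_of_gt (Real.sqrt_pos.mpr h)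
      have hne0 : hσ1.eigenvalues i ≠ 0 := ne_of_gt h
      rw [mul_inv_cancel₀ hne, if_neg hne0]
    · simp [← h]
  have hts : pinvSqrt σ * sqrtm σ = suppProj σ := by
    show matFun (fun x => (Real.sqrt x)⁻¹) σ * matFun Real.sqrt σ
      = matFun (fun x => if x = 0 then 0 else 1) σ
    rw [matFun_mul hσ1]
    refine matFun_congr hσ1 fun i => ?_
    rcases (hσ.eigenvalues_nonneg i).lt_or_eq with h | h
    · have hne : Real.sqrt (hσ1.eigenvalues i) ≠ 0 := ne_of_gt (Real.sqrt_pos.mpr h)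
      have hne0 : hσ1.eigenvalues i ≠ 0 := ne_of_gt h
      rw [inv_mul_cancel₀ hne, if_neg hne0]
    · simp [← h]
  have hprH : (suppProj σ)ᴴ = suppProj σ := matFun_isHermitian hσ1 _
  have hprσ : suppProj σ * σ = σ := by
    have h0 : suppProj σ * σ
        = matFun (fun x => if x = 0 then 0 else 1) σ * matFun (fun x => x) σ := by
      rw [matFun_id hσ1]; rfl
    rw [h0, matFun_mul hσ1,
      matFun_congr hσ1 (g' := fun x => x)
        (fun i => by by_cases h : hσ1.eigenvalues i = 0 <;> simp [h]),
      matFun_id hσ1]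
  have hprρ : suppProj σ * ρ = ρ := by
    have key : ∀ v : Fin n → ℂ, suppProj σ *ᵥ (ρ *ᵥ v) = ρ *ᵥ v := by
      intro v
      obtain ⟨w, hw⟩ := hsupp ⟨v, rfl⟩
      simp only [Matrix.mulVecLin_apply] at hw
      rw [← hw, Matrix.mulVec_mulVec, hprσ]
    ext i j
    have h2 := key (Pi.single j 1)
    rw [Matrix.mulVec_mulVec] at h2
    have h3 := congrFun h2 i
    simpa using h3
  have hρpr : ρ * suppProj σ = ρ := by
    have := congrArg Matrix.conjTranspose hprρ
    rwa [Matrix.conjTranspose_mul, hprH, hρ1.eq] at this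
  -- d facts
  have hd : (dRN ρ σ).IsHermitian := by
    have htH : (pinvSqrt σ)ᴴ = pinvSqrt σ := matFun_isHermitian hσ1 _
    show (pinvSqrt σ * ρ * pinvSqrt σ)ᴴ = pinvSqrt σ * ρ * pinvSqrt σ
    rw [Matrix.conjTranspose_mul, Matrix.conjTranspose_mul, htH, hρ1.eq, mul_assoc]
  have hsds : sqrtm σ * dRN ρ σ * sqrtm σ = ρ := by
    show sqrtm σ * (pinvSqrt σ * ρ * pinvSqrt σ) * sqrtm σ = ρ
    calc sqrtm σ * (pinvSqrt σ * ρ * pinvSqrt σ) * sqrtm σ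
        = (sqrtm σ * pinvSqrt σ) * (ρ * (pinvSqrt σ * sqrtm σ)) := by
          simp only [mul_assoc]
      _ = suppProj σ * (ρ * suppProj σ) := by rw [hst, hts]
      _ = ρ := by rw [hρpr, hprρ]
  set S : Finset ℝ := Finset.univ.image hd.eigenvalues with hS
  have hX : mrtX ρ σ = S.filter (fun c => mrtQ ρ σ c ≠ 0) := by
    unfold mrtX
    rw [dif_pos hd]
  -- sum of spectral projections
  have hsum : ∀ w : ℝ → ℝ,
      ∑ c ∈ S, (w c : ℂ) • eigProj (dRN ρ σ) c = matFun w (dRN ρ σ) := by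
    intro w
    have h1 := sum_smul_matFun hd S w (fun c => fun x => if x = c then 1 else 0)
    rw [show (fun x => ∑ c ∈ S, w c * if x = c then 1 else 0)
        = fun x => ∑ c ∈ S, if x = c then w c else 0 from by
      funext x; exact Finset.sum_congr rfl fun c _ => by split <;> simp] at h1
    refine h1.trans (matFun_congr hd fun i => ?_)
    rw [Finset.sum_ite_eq S (hd.eigenvalues i) w]
    simp [hS]
  have hP2 : ∀ c : ℝ, eigProj (dRN ρ σ) c * eigProj (dRN ρ σ) c = eigProj (dRN ρ σ) c := by
    intro c
    show matFun _ (dRN ρ σ) * matFun _ (dRN ρ σ) = matFun _ (dRN ρ σ)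
    rw [matFun_mul hd]
    exact matFun_congr hd fun i => by by_cases h : hd.eigenvalues i = c <;> simp [h]
  have hPH : ∀ c : ℝ, (eigProj (dRN ρ σ) c)ᴴ = eigProj (dRN ρ σ) c :=
    fun c => matFun_isHermitian hd _
  have hsH : (sqrtm σ)ᴴ = sqrtm σ := matFun_isHermitian hσ1 _
  have hBfact : ∀ c : ℝ, sqrtm σ * eigProj (dRN ρ σ) c * sqrtm σ
      = (sqrtm σ * eigProj (dRN ρ σ) c) * (sqrtm σ * eigProj (dRN ρ σ) c)ᴴ := by
    intro c
    rw [Matrix.conjTranspose_mul, hPH c, hsH]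
    calc sqrtm σ * eigProj (dRN ρ σ) c * sqrtm σ
        = sqrtm σ * (eigProj (dRN ρ σ) c * eigProj (dRN ρ σ) c) * sqrtm σ := by rw [hP2 c]
      _ = (sqrtm σ * eigProj (dRN ρ σ) c) * (eigProj (dRN ρ σ) c * sqrtm σ) := by
          simp only [mul_assoc]
  have htr : ∀ c : ℝ, (σ * eigProj (dRN ρ σ) c).trace
      = (sqrtm σ * eigProj (dRN ρ σ) c * sqrtm σ).trace := by
    intro c
    have h1 : σ * eigProj (dRN ρ σ) c = sqrtm σ * (sqrtm σ * eigProj (dRN ρ σ) c) := by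
      rw [← mul_assoc, hss]
    rw [h1, Matrix.trace_mul_comm]
  have hqval : ∀ c : ℝ, ((mrtQ ρ σ c : ℝ) : ℂ) = (σ * eigProj (dRN ρ σ) c).trace := by
    intro c
    have h0 : (σ * eigProj (dRN ρ σ) c).trace
        = ((∑ i, ∑ j, Complex.normSq ((sqrtm σ * eigProj (dRN ρ σ) c) i j) : ℝ) : ℂ) := by
      rw [htr c, hBfact c, traceBBH]
    show (((σ * eigProj (dRN ρ σ) c).trace).re : ℂ) = (σ * eigProj (dRN ρ σ) c).trace
    rw [h0]
    simp
  have hqzero : ∀ c : ℝ, mrtQ ρ σ c = 0 →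
      sqrtm σ * eigProj (dRN ρ σ) c * sqrtm σ = 0 := by
    intro c hq
    rw [hBfact c]
    apply BBH_eq_zero
    have : ((sqrtm σ * eigProj (dRN ρ σ) c) * (sqrtm σ * eigProj (dRN ρ σ) c)ᴴ).trace
        = (σ * eigProj (dRN ρ σ) c).trace := by rw [htr c, hBfact c]
    rw [this]
    exact hq
  have htrsps : ∀ c : ℝ, (sqrtm σ * eigProj (dRN ρ σ) c * sqrtm σ).trace
      = ((mrtQ ρ σ c : ℝ) : ℂ) := fun c => by rw [← htr c, hqval c]
  have hqnn : ∀ c : ℝ, 0 ≤ mrtQ ρ σ c := by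
    intro c
    show 0 ≤ ((σ * eigProj (dRN ρ σ) c).trace).re
    have h0 : (σ * eigProj (dRN ρ σ) c).trace
        = ((∑ i, ∑ j, Complex.normSq ((sqrtm σ * eigProj (dRN ρ σ) c) i j) : ℝ) : ℂ) := by
      rw [htr c, hBfact c, traceBBH]
    rw [h0, Complex.ofReal_re]
    exact Finset.sum_nonneg fun i _ => Finset.sum_nonneg fun j _ => Complex.normSq_nonneg _
  have hGamma : ∀ c : ℝ, mrtGamma ρ σ c
      = (mrtQ ρ σ c)⁻¹ • (sqrtm σ * eigProj (dRN ρ σ) c * sqrtm σ) := fun _ => rfl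
  -- first clause
  refine ⟨?_, ?_, ?_, ?_⟩
  · intro c hc
    rw [hX, Finset.mem_filter] at hc
    obtain ⟨-, hq⟩ := hc
    constructor
    · have key : mrtGamma ρ σ c
          = ((Real.sqrt (mrtQ ρ σ c)⁻¹ : ℂ) • (sqrtm σ * eigProj (dRN ρ σ) c)) *
            ((Real.sqrt (mrtQ ρ σ c)⁻¹ : ℂ) • (sqrtm σ * eigProj (dRN ρ σ) c))ᴴ := by
        rw [hGamma c, hBfact c, Matrix.conjTranspose_smul, Matrix.smul_mul, Matrix.mul_smul,
          smul_smul, realSmul]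
        congr 1
        rw [RCLike.star_def, Complex.conj_ofReal, ← Complex.ofReal_mul,
          Real.mul_self_sqrt (inv_nonneg.mpr (hqnn c))]
      rw [key]
      exact Matrix.posSemidef_self_mul_conjTranspose _
    · rw [hGamma c, Matrix.trace_smul, htrsps c]
      rw [Complex.real_smul, ← Complex.ofReal_mul, inv_mul_cancel₀ hq, Complex.ofReal_one]
  · -- sum p
    rw [hX]
    calc ∑ c ∈ S.filter (fun c => mrtQ ρ σ c ≠ 0), (mrtP ρ σ c : ℂ) • mrtGamma ρ σ c
        = ∑ c ∈ S.filter (fun c => mrtQ ρ σ c ≠ 0),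
            (c : ℂ) • (sqrtm σ * eigProj (dRN ρ σ) c * sqrtm σ) := by
          refine Finset.sum_congr rfl fun c hc => ?_
          obtain ⟨-, hq⟩ := Finset.mem_filter.mp hc
          rw [hGamma c, realSmul, smul_smul, ← Complex.ofReal_mul]
          show ((mrtP ρ σ c * (mrtQ ρ σ c)⁻¹ : ℝ) : ℂ) • _ = _
          rw [show mrtP ρ σ c * (mrtQ ρ σ c)⁻¹ = c from by
            unfold mrtP; field_simp]
      _ = ∑ c ∈ S, (c : ℂ) • (sqrtm σ * eigProj (dRN ρ σ) c * sqrtm σ) := by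
          refine Finset.sum_filter_of_ne fun c hc hne => ?_
          intro hq0
          exact hne (by rw [hqzero c hq0, smul_zero])
      _ = sqrtm σ * (∑ c ∈ S, (c : ℂ) • eigProj (dRN ρ σ) c) * sqrtm σ := by
          rw [Finset.mul_sum, Finset.sum_mul]
          exact Finset.sum_congr rfl fun c _ => by
            rw [Matrix.mul_smul, Matrix.smul_mul]
      _ = ρ := by
          rw [hsum (fun x => x), matFun_id hd, hsds]
  · -- sum q
    rw [hX]
    calc ∑ c ∈ S.filter (fun c => mrtQ ρ σ c ≠ 0), (mrtQ ρ σ c : ℂ) • mrtGamma ρ σ c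
        = ∑ c ∈ S.filter (fun c => mrtQ ρ σ c ≠ 0),
            (sqrtm σ * eigProj (dRN ρ σ) c * sqrtm σ) := by
          refine Finset.sum_congr rfl fun c hc => ?_
          obtain ⟨-, hq⟩ := Finset.mem_filter.mp hc
          rw [hGamma c, realSmul, smul_smul, ← Complex.ofReal_mul,
            mul_inv_cancel₀ hq, Complex.ofReal_one, one_smul]
      _ = ∑ c ∈ S, (sqrtm σ * eigProj (dRN ρ σ) c * sqrtm σ) := by
          refine Finset.sum_filter_of_ne fun c hc hne => ?_
          intro hq0
          exact hne (hqzero c hq0)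
      _ = sqrtm σ * (∑ c ∈ S, eigProj (dRN ρ σ) c) * sqrtm σ := by
          rw [Finset.mul_sum, Finset.sum_mul]
      _ = σ := by
          have h1 := hsum (fun _ => 1)
          simp only [Complex.ofReal_one, one_smul] at h1
          rw [h1, matFun_one hd, mul_one, hss]
  · -- f statement
    intro f
    have hrhs : (σ * matFun f (dRN ρ σ)).trace
        = ∑ c ∈ S, (f c : ℂ) * (mrtQ ρ σ c : ℂ) := by
      rw [← hsum f, Finset.mul_sum, Matrix.trace_sum]
      refine Finset.sum_congr rfl fun c _ => ?_
      rw [Matrix.mul_smul, Matrix.trace_smul, hqval c]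
      rfl
    rw [hrhs, hX]
    push_cast
    rw [show ∑ c ∈ S, (f c : ℂ) * (mrtQ ρ σ c : ℂ)
        = ∑ c ∈ S.filter (fun c => mrtQ ρ σ c ≠ 0), (f c : ℂ) * (mrtQ ρ σ c : ℂ) from by
      refine (Finset.sum_filter_of_ne fun c hc hne => ?_).symm
      intro hq0
      exact hne (by rw [hq0]; push_cast; ring)]
    refine Finset.sum_congr rfl fun c hc => ?_
    obtain ⟨-, hq⟩ := Finset.mem_filter.mp hc
    rw [show mrtP ρ σ c / mrtQ ρ σ c = c from by unfold mrtP; field_simp]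
    ring


end
end

section
/- Let f satisfy condition (FC). Then D_f^max is jointly convex: for all positive semidefinite matrices ρ₀, ρ₁, σ₀, σ₁ on a finite-dimensional complex Hilbert space and all c ∈ [0,1], D_f^max(cρ₀+(1−c)ρ₁ || cσ₀+(1−c)σ₁) ≤ c·D_f^max(ρ₀||σ₀) + (1−c)·D_f^max(ρ₁||σ₁). -/
open Matrix Filter MeasureTheory
open scoped Topology Classical ComplexOrder

noncomputable section

lemma coe_nonneg_ereal {c : ℝ} (hc : 0 ≤ c) : (0 : EReal) ≤ (c : EReal) :=
  EReal.coe_nonneg.2 hc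

/-- multiplication by a positive real as an order iso of EReal -/
def erealMulIso (c : ℝ) (hc : 0 < c) : EReal ≃o EReal where
  toFun x := (c : EReal) * x
  invFun x := ((c⁻¹ : ℝ) : EReal) * x
  left_inv x := by
    show ((c⁻¹ : ℝ) : EReal) * ((c : EReal) * x) = x
    rw [← mul_assoc, ← EReal.coe_mul, inv_mul_cancel₀ hc.ne', EReal.coe_one, one_mul]
  right_inv x := by
    show ((c : ℝ) : EReal) * (((c⁻¹:ℝ) : EReal) * x) = x
    rw [← mul_assoc, ← EReal.coe_mul, mul_inv_cancel₀ hc.ne', EReal.coe_one, one_mul]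
  map_rel_iff' := by
    intro x y
    show (c : EReal) * x ≤ (c : EReal) * y ↔ x ≤ y
    constructor
    · intro h
      have := mul_le_mul_of_nonneg_left h (coe_nonneg_ereal (le_of_lt (inv_pos.2 hc)))
      rwa [← mul_assoc, ← mul_assoc, ← EReal.coe_mul, inv_mul_cancel₀ hc.ne', EReal.coe_one,
        one_mul, one_mul] at this
    · intro h
      exact mul_le_mul_of_nonneg_left h (coe_nonneg_ereal hc.le)

lemma limsup_const_mul_ereal (c : ℝ) (hc : 0 < c) (u : ℝ → EReal) (F : Filter ℝ) :
    limsup (fun x => (c : EReal) * u x) F = (c : EReal) * limsup u F :=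
  ((erealMulIso c hc).limsup_apply).symm

lemma tendsto_mul_nhdsGT_zero (c : ℝ) (hc : 0 < c) :
    Filter.Tendsto (fun x : ℝ => c * x) (𝓝[>] (0:ℝ)) (𝓝[>] (0:ℝ)) := by
  apply tendsto_nhdsWithin_of_tendsto_nhds_of_eventually_within
  · have h : Filter.Tendsto (fun x : ℝ => c * x) (𝓝 (0:ℝ)) (𝓝 (0:ℝ)) := by
      exact (continuous_const.mul continuous_id : Continuous fun x : ℝ => c * x).tendsto' (0:ℝ) 0 (by simp)
    exact h.mono_left nhdsWithin_le_nhds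
  · filter_upwards [self_mem_nhdsWithin] with x (hx : x ∈ Set.Ioi (0:ℝ))
    exact mul_pos hc hx

lemma map_mul_nhdsGT_zero (c : ℝ) (hc : 0 < c) :
    Filter.map (fun x : ℝ => c * x) (𝓝[>] (0:ℝ)) = 𝓝[>] (0:ℝ) := by
  refine le_antisymm (tendsto_mul_nhdsGT_zero c hc) ?_
  have h2 := tendsto_mul_nhdsGT_zero c⁻¹ (inv_pos.2 hc)
  have : 𝓝[>] (0:ℝ) =
      Filter.map (fun x : ℝ => c * x) (Filter.map (fun x : ℝ => c⁻¹ * x) (𝓝[>] (0:ℝ))) := by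
    rw [Filter.map_map]
    have h3 : ((fun x : ℝ => c * x) ∘ fun x : ℝ => c⁻¹ * x) = id := by
      funext x; simp [← mul_assoc, mul_inv_cancel₀ hc.ne']
    rw [h3, Filter.map_id]
  nth_rw 1 [this]
  exact Filter.map_mono h2

lemma zeroMulConv_smul (f : ℝ → EReal) (c γ : ℝ) (hc : 0 < c) :
    zeroMulConv f (c * γ) = (c : EReal) * zeroMulConv f γ := by
  unfold zeroMulConv
  calc Filter.limsup (fun ε : ℝ => (ε : EReal) * f (c * γ / ε)) (𝓝[>] (0 : ℝ))
      = Filter.limsup (fun ε : ℝ => (ε : EReal) * f (c * γ / ε))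
          (Filter.map (fun x : ℝ => c * x) (𝓝[>] (0:ℝ))) := by
        rw [map_mul_nhdsGT_zero c hc]
    _ = Filter.limsup (fun δ : ℝ => (c : EReal) * ((δ : EReal) * f (γ / δ))) (𝓝[>] (0:ℝ)) := by
        rw [Filter.limsup, Filter.limsup, Filter.map_map]
        apply congrArg
        apply Filter.map_congr
        filter_upwards [self_mem_nhdsWithin] with x (hx : x ∈ Set.Ioi (0:ℝ))
        show ((c*x : ℝ) : EReal) * f (c * γ / (c * x)) = (c : EReal) * ((x : EReal) * f (γ / x))
        rw [mul_div_mul_left γ x hc.ne', EReal.coe_mul, mul_assoc]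
    _ = (c : EReal) * Filter.limsup (fun δ : ℝ => (δ : EReal) * f (γ / δ)) (𝓝[>] (0:ℝ)) :=
        limsup_const_mul_ereal c hc _ _

lemma ereal_div_lower {t v w : ℝ} (ht : 0 < t) (X : EReal) (hX : X ≠ ⊥)
    (h : (w : EReal) ≤ (t : EReal) * X + (v : EReal)) :
    (((w - v) / t : ℝ) : EReal) ≤ X := by
  induction X with
  | bot => exact absurd rfl hX
  | coe x =>
      rw [← EReal.coe_mul, ← EReal.coe_add, EReal.coe_le_coe_iff] at h
      exact EReal.coe_le_coe_iff.2 ((div_le_iff₀ ht).2 (by nlinarith))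
  | top => exact le_top

lemma affine_minorant (f : ℝ → EReal) (hf : IsFC f) :
    ∃ a b : ℝ, ∀ y : ℝ, 0 ≤ y → ((a + b * y : ℝ) : EReal) ≤ f y := by
  by_cases H : ∀ y : ℝ, 0 < y → f y = ⊤
  · refine ⟨0, 0, fun y hy => ?_⟩
    rcases eq_or_lt_of_le hy with h | h
    · simp [← h, hf.zero]
    · simp [H y h]
  · push_neg at H
    obtain ⟨y₀, hy₀, hfy₀⟩ := H
    have hbot₀ := hf.ne_bot y₀ hy₀.le
    lift f y₀ to ℝ using ⟨hfy₀, hbot₀⟩ with v₀ hv₀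
    set m := y₀ / 2 with hm
    have hm0 : 0 < m := by positivity
    have hy₀2 : y₀ = 2 * m := by rw [hm]; ring
    -- f m is a real number
    have hfm_le : f m ≤ ((v₀ / 2 : ℝ) : EReal) := by
      have hc := hf.convex hy₀.le (le_refl (0:ℝ)) (by norm_num : (0:ℝ) ≤ 1/2) (by norm_num)
      have harg : (1/2 : ℝ) * y₀ + (1 - 1/2) * 0 = m := by rw [hm]; ring
      rw [harg] at hc
      calc f m ≤ ((1/2 : ℝ) : EReal) * f y₀ + ((1 - 1/2 : ℝ) : EReal) * f 0 := hc
        _ = ((v₀ / 2 : ℝ) : EReal) := by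
            rw [hf.zero, ← hv₀, mul_zero, add_zero, ← EReal.coe_mul]
            exact congrArg _ (by ring)
    have hfm_ne_top : f m ≠ ⊤ := (lt_of_le_of_lt hfm_le (EReal.coe_lt_top _)).ne
    have hfm_ne_bot : f m ≠ ⊥ := hf.ne_bot m hm0.le
    obtain ⟨w, hw⟩ : ∃ w : ℝ, f m = (w : EReal) := by
      lift f m to ℝ using ⟨hfm_ne_top, hfm_ne_bot⟩ with w hw
      exact ⟨w, rfl⟩
    -- Region 1 : y ≥ m
    have R1 : ∀ y : ℝ, m ≤ y → ((w / m * y : ℝ) : EReal) ≤ f y := by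
      intro y hy
      have hy0 : 0 < y := lt_of_lt_of_le hm0 hy
      set t := m / y with htdef
      have ht0 : 0 < t := div_pos hm0 hy0
      have ht1 : t ≤ 1 := (div_le_one hy0).2 hy
      have hc := hf.convex hy0.le (le_refl (0:ℝ)) ht0.le ht1
      have harg : t * y + (1 - t) * 0 = m := by
        rw [htdef, mul_zero, add_zero, div_mul_cancel₀ m hy0.ne']
      rw [harg, hw, hf.zero, mul_zero, add_zero] at hc
      have hc' : (w : EReal) ≤ (t : EReal) * f y + ((0 : ℝ) : EReal) := by
        rw [EReal.coe_zero, add_zero]; exact hc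
      have := ereal_div_lower ht0 (f y) (hf.ne_bot y hy0.le) hc'
      have heq : (w - 0) / t = w / m * y := by
        rw [htdef, sub_zero, div_div_eq_mul_div, mul_div_right_comm]
      rwa [heq] at this
    -- Region 2 : 0 ≤ y ≤ m
    set A := 2 * w - v₀ with hA
    set B := (v₀ - w) / m with hB
    have R2 : ∀ y : ℝ, 0 ≤ y → y ≤ m → ((A + B * y : ℝ) : EReal) ≤ f y := by
      intro y hy0 hym
      have hden : 0 < 2 * m - y := by linarith
      set t := m / (2 * m - y) with htdef
      have ht0 : 0 < t := div_pos hm0 hden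
      have ht1 : t ≤ 1 := (div_le_one hden).2 (by linarith)
      have hc := hf.convex hy0 hy₀.le ht0.le ht1
      have harg : t * y + (1 - t) * y₀ = m := by
        rw [hy₀2, htdef]
        linear_combination (-m) * (mul_inv_cancel₀ hden.ne' : (2*m - y) * (2*m - y)⁻¹ = 1)
      rw [harg, hw, ← hv₀, ← EReal.coe_mul] at hc
      have := ereal_div_lower ht0 (f y) (hf.ne_bot y hy0) hc
      have heq : (w - (1 - t) * v₀) / t = A + B * y := by
        rw [div_eq_iff ht0.ne', htdef, hA, hB]
        linear_combination (-(w - v₀)) * (mul_inv_cancel₀ hden.ne' : (2*m - y) * (2*m - y)⁻¹ = 1) + (-(v₀ - w) * y * (2*m - y)⁻¹) * (mul_inv_cancel₀ hm0.ne' : m * m⁻¹ = 1)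
      rwa [heq] at this
    -- combine
    refine ⟨min A (w - min B (w / m) * m), min B (w / m), fun y hy => ?_⟩
    set b := min B (w / m) with hbdef
    set a := min A (w - b * m) with hadef
    rcases le_or_gt y m with hym | hym
    · refine le_trans (EReal.coe_le_coe_iff.2 ?_) (R2 y hy hym)
      have h1 : a ≤ A := min_le_left _ _
      have h2 : b * y ≤ B * y := mul_le_mul_of_nonneg_right (min_le_left _ _) hy
      linarith
    · refine le_trans (EReal.coe_le_coe_iff.2 ?_) (R1 y hym.le)
      have h1 : a ≤ w - b * m := min_le_right _ _
      have h2 : b * (y - m) ≤ w / m * (y - m) :=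
        mul_le_mul_of_nonneg_right (min_le_right _ _) (by linarith)
      have hw' : w / m * m = w := by field_simp
      nlinarith

-- scalar distributes over EReal addition
lemma ereal_coe_mul_add (c : ℝ) (hc : 0 ≤ c) (x y : EReal) :
    (c : EReal) * (x + y) = (c : EReal) * x + (c : EReal) * y := by
  rcases eq_or_lt_of_le hc with rfl | hc'
  · simp
  · induction x with
    | bot => simp [EReal.coe_mul_bot_of_pos hc']
    | top =>
      induction y with
      | bot => simp [EReal.coe_mul_bot_of_pos hc', EReal.coe_mul_top_of_pos hc']
      | coe r =>
        rw [EReal.top_add_of_ne_bot (EReal.coe_ne_bot r), EReal.coe_mul_top_of_pos hc',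
          ← EReal.coe_mul, EReal.top_add_of_ne_bot (EReal.coe_ne_bot _)]
      | top => simp [EReal.coe_mul_top_of_pos hc']
    | coe r =>
      induction y with
      | bot => simp [EReal.coe_mul_bot_of_pos hc', ← EReal.coe_mul]
      | coe s => rw [← EReal.coe_add, ← EReal.coe_mul, ← EReal.coe_mul, ← EReal.coe_mul,
          ← EReal.coe_add, mul_add]
      | top =>
        rw [EReal.add_top_of_ne_bot (EReal.coe_ne_bot r), EReal.coe_mul_top_of_pos hc',
          ← EReal.coe_mul, EReal.add_top_of_ne_bot (EReal.coe_ne_bot _)]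

lemma ereal_coe_mul_sum (c : ℝ) (hc : 0 ≤ c) {α : Type*} (s : Finset α) (g : α → EReal) :
    (c : EReal) * ∑ x ∈ s, g x = ∑ x ∈ s, (c : EReal) * g x := by
  classical
  induction s using Finset.induction_on with
  | empty => simp
  | insert _ _ hx ih =>
    rw [Finset.sum_insert hx, Finset.sum_insert hx, ereal_coe_mul_add c hc, ih]

lemma ereal_coe_mul_ne_bot {c : ℝ} (hc : 0 < c) {X : EReal} (hX : X ≠ ⊥) :
    (c : EReal) * X ≠ ⊥ := by
  induction X with
  | bot => exact absurd rfl hX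
  | coe r => rw [← EReal.coe_mul]; exact EReal.coe_ne_bot _
  | top => rw [EReal.coe_mul_top_of_pos hc]; exact top_ne_bot

-- sums of weights of a reverse test
lemma test_sum_p {n k : ℕ} {ρ σ : Matrix (Fin n) (Fin n) ℂ}
    {Γ : Fin k → Matrix (Fin n) (Fin n) ℂ} {p q : Fin k → ℝ}
    (h : IsReverseTest ρ σ Γ p q) : ∑ x, p x = ρ.trace.re := by
  have h5 := h.2.2.2.2.1
  have : (∑ x, (p x : ℂ)) = ρ.trace := by
    rw [← h5, Matrix.trace_sum]
    simp [Matrix.trace_smul, h.2.1]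
  calc ∑ x, p x = ((∑ x, (p x : ℂ))).re := by simp
    _ = ρ.trace.re := by rw [this]
  
lemma test_sum_q {n k : ℕ} {ρ σ : Matrix (Fin n) (Fin n) ℂ}
    {Γ : Fin k → Matrix (Fin n) (Fin n) ℂ} {p q : Fin k → ℝ}
    (h : IsReverseTest ρ σ Γ p q) : ∑ x, q x = σ.trace.re := by
  have h6 := h.2.2.2.2.2
  have : (∑ x, (q x : ℂ)) = σ.trace := by
    rw [← h6, Matrix.trace_sum]
    simp [Matrix.trace_smul, h.2.1]
  calc ∑ x, q x = ((∑ x, (q x : ℂ))).re := by simp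
    _ = σ.trace.re := by rw [this]

lemma ereal_coe_sum {α : Type*} (s : Finset α) (g : α → ℝ) :
    ((∑ x ∈ s, g x : ℝ) : EReal) = ∑ x ∈ s, ((g x : ℝ) : EReal) := by
  classical
  induction s using Finset.induction_on with
  | empty => simp
  | insert _ _ hx ih => rw [Finset.sum_insert hx, Finset.sum_insert hx, EReal.coe_add, ih]

lemma zeroMulConv_lower (f : ℝ → EReal) {a b : ℝ}
    (hmin : ∀ y : ℝ, 0 ≤ y → ((a + b * y : ℝ) : EReal) ≤ f y) {γ : ℝ} (hγ : 0 ≤ γ) :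
    ((b * γ : ℝ) : EReal) ≤ zeroMulConv f γ := by
  have hev : ∀ᶠ ε in 𝓝[>] (0:ℝ),
      ((ε * a + b * γ : ℝ) : EReal) ≤ (ε : EReal) * f (γ / ε) := by
    filter_upwards [self_mem_nhdsWithin] with ε (hε : ε ∈ Set.Ioi (0:ℝ))
    have hε0 : (0:ℝ) < ε := hε
    have h1 : ((a + b * (γ / ε) : ℝ) : EReal) ≤ f (γ / ε) :=
      hmin _ (div_nonneg hγ hε0.le)
    have h2 := mul_le_mul_of_nonneg_left h1 (EReal.coe_nonneg.2 hε0.le)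
    rw [← EReal.coe_mul] at h2
    have heq : ε * (a + b * (γ / ε)) = ε * a + b * γ := by
      field_simp
    rwa [heq] at h2
  have htend : Filter.Tendsto (fun ε : ℝ => ((ε * a + b * γ : ℝ) : EReal)) (𝓝[>] (0:ℝ))
      (𝓝 ((b * γ : ℝ) : EReal)) := by
    rw [EReal.tendsto_coe]
    have : Filter.Tendsto (fun ε : ℝ => ε * a + b * γ) (𝓝 (0:ℝ)) (𝓝 (0 * a + b * γ)) := by
      exact ((continuous_id.mul continuous_const).add continuous_const).tendsto 0
    simpa using this.mono_left nhdsWithin_le_nhds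
  calc ((b * γ : ℝ) : EReal) = Filter.limsup (fun ε : ℝ => ((ε * a + b * γ : ℝ) : EReal))
        (𝓝[>] (0:ℝ)) := (htend.limsup_eq).symm
    _ ≤ zeroMulConv f γ := Filter.limsup_le_limsup hev

lemma DfFinset_lower (f : ℝ → EReal) {a b : ℝ}
    (hmin : ∀ y : ℝ, 0 ≤ y → ((a + b * y : ℝ) : EReal) ≤ f y)
    {k : ℕ} {p q : Fin k → ℝ} (hp : ∀ x, 0 ≤ p x) (hq : ∀ x, 0 ≤ q x) :
    ((a * ∑ x, q x + b * ∑ x, p x : ℝ) : EReal) ≤ DfFinset f Finset.univ p q := by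
  have key : ∀ x : Fin k, ((a * q x + b * p x : ℝ) : EReal) ≤
      (if q x = 0 then zeroMulConv f (p x) else (q x : EReal) * f (p x / q x)) := by
    intro x
    by_cases hqx : q x = 0
    · rw [if_pos hqx, hqx]
      have := zeroMulConv_lower f hmin (hp x)
      calc ((a * 0 + b * p x : ℝ) : EReal) = ((b * p x : ℝ) : EReal) := by norm_num
        _ ≤ zeroMulConv f (p x) := this
    · rw [if_neg hqx]
      have hqx' : 0 < q x := lt_of_le_of_ne (hq x) (Ne.symm hqx)
      have h1 : ((a + b * (p x / q x) : ℝ) : EReal) ≤ f (p x / q x) :=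
        hmin _ (div_nonneg (hp x) (hq x))
      have h2 := mul_le_mul_of_nonneg_left h1 (EReal.coe_nonneg.2 (hq x))
      rw [← EReal.coe_mul] at h2
      have heq : q x * (a + b * (p x / q x)) = a * q x + b * p x := by
        field_simp
      rwa [heq] at h2
  calc ((a * ∑ x, q x + b * ∑ x, p x : ℝ) : EReal)
      = ((∑ x, (a * q x + b * p x) : ℝ) : EReal) := by
        rw [Finset.sum_add_distrib, ← Finset.mul_sum, ← Finset.mul_sum]
    _ = ∑ x, ((a * q x + b * p x : ℝ) : EReal) := ereal_coe_sum _ _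
    _ ≤ DfFinset f Finset.univ p q := Finset.sum_le_sum (fun x _ => key x)

lemma DfMax_lower (f : ℝ → EReal) (hf : IsFC f) {a b : ℝ}
    (hmin : ∀ y : ℝ, 0 ≤ y → ((a + b * y : ℝ) : EReal) ≤ f y)
    {n : ℕ} (ρ σ : Matrix (Fin n) (Fin n) ℂ) :
    ((a * σ.trace.re + b * ρ.trace.re : ℝ) : EReal) ≤ DfMax f ρ σ := by
  refine le_iInf fun k => le_iInf fun Γ => le_iInf fun p => le_iInf fun q => le_iInf fun h => ?_
  rw [← test_sum_q h, ← test_sum_p h]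
  exact DfFinset_lower f hmin h.2.2.1 h.2.2.2.1

section combine
variable {n k₀ k₁ : ℕ} {ρ₀ ρ₁ σ₀ σ₁ : Matrix (Fin n) (Fin n) ℂ}
  (Γ₀ : Fin k₀ → Matrix (Fin n) (Fin n) ℂ) (Γ₁ : Fin k₁ → Matrix (Fin n) (Fin n) ℂ)
  (p₀ q₀ : Fin k₀ → ℝ) (p₁ q₁ : Fin k₁ → ℝ) (c : ℝ)

lemma combined_isReverseTest (hc0 : 0 ≤ c) (hc1 : c ≤ 1)
    (h₀ : IsReverseTest ρ₀ σ₀ Γ₀ p₀ q₀) (h₁ : IsReverseTest ρ₁ σ₁ Γ₁ p₁ q₁) :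
    IsReverseTest ((c : ℂ) • ρ₀ + ((1 - c : ℝ) : ℂ) • ρ₁)
      ((c : ℂ) • σ₀ + ((1 - c : ℝ) : ℂ) • σ₁)
      (Fin.append Γ₀ Γ₁)
      (Fin.append (fun x => c * p₀ x) (fun x => (1 - c) * p₁ x))
      (Fin.append (fun x => c * q₀ x) (fun x => (1 - c) * q₁ x)) := by
  obtain ⟨hΓ₀, htr₀, hp₀, hq₀, hsp₀, hsq₀⟩ := h₀
  obtain ⟨hΓ₁, htr₁, hp₁, hq₁, hsp₁, hsq₁⟩ := h₁
  refine ⟨?_, ?_, ?_, ?_, ?_, ?_⟩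
  · intro x
    refine Fin.addCases (fun i => ?_) (fun i => ?_) x
    · rw [Fin.append_left]; exact hΓ₀ i
    · rw [Fin.append_right]; exact hΓ₁ i
  · intro x
    refine Fin.addCases (fun i => ?_) (fun i => ?_) x
    · rw [Fin.append_left]; exact htr₀ i
    · rw [Fin.append_right]; exact htr₁ i
  · intro x
    refine Fin.addCases (fun i => ?_) (fun i => ?_) x
    · rw [Fin.append_left]; exact mul_nonneg hc0 (hp₀ i)
    · rw [Fin.append_right]; exact mul_nonneg (by linarith) (hp₁ i)
  · intro x
    refine Fin.addCases (fun i => ?_) (fun i => ?_) x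
    · rw [Fin.append_left]; exact mul_nonneg hc0 (hq₀ i)
    · rw [Fin.append_right]; exact mul_nonneg (by linarith) (hq₁ i)
  · rw [Fin.sum_univ_add]
    have e₀ : ∀ i : Fin k₀,
        ((Fin.append (fun x => c * p₀ x) (fun x => (1 - c) * p₁ x) (Fin.castAdd k₁ i) : ℝ) : ℂ) •
          (Fin.append Γ₀ Γ₁ (Fin.castAdd k₁ i)) = (c : ℂ) • ((p₀ i : ℂ) • Γ₀ i) := by
      intro i
      rw [Fin.append_left, Fin.append_left, smul_smul]
      push_cast
      ring_nf
    have e₁ : ∀ i : Fin k₁,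
        ((Fin.append (fun x => c * p₀ x) (fun x => (1 - c) * p₁ x) (Fin.natAdd k₀ i) : ℝ) : ℂ) •
          (Fin.append Γ₀ Γ₁ (Fin.natAdd k₀ i)) = ((1 - c : ℝ) : ℂ) • ((p₁ i : ℂ) • Γ₁ i) := by
      intro i
      rw [Fin.append_right, Fin.append_right, smul_smul]
      push_cast
      ring_nf
    simp only [e₀, e₁, ← Finset.smul_sum, hsp₀, hsp₁]
  · rw [Fin.sum_univ_add]
    have e₀ : ∀ i : Fin k₀,
        ((Fin.append (fun x => c * q₀ x) (fun x => (1 - c) * q₁ x) (Fin.castAdd k₁ i) : ℝ) : ℂ) •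
          (Fin.append Γ₀ Γ₁ (Fin.castAdd k₁ i)) = (c : ℂ) • ((q₀ i : ℂ) • Γ₀ i) := by
      intro i
      rw [Fin.append_left, Fin.append_left, smul_smul]
      push_cast
      ring_nf
    have e₁ : ∀ i : Fin k₁,
        ((Fin.append (fun x => c * q₀ x) (fun x => (1 - c) * q₁ x) (Fin.natAdd k₀ i) : ℝ) : ℂ) •
          (Fin.append Γ₀ Γ₁ (Fin.natAdd k₀ i)) = ((1 - c : ℝ) : ℂ) • ((q₁ i : ℂ) • Γ₁ i) := by
      intro i
      rw [Fin.append_right, Fin.append_right, smul_smul]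
      push_cast
      ring_nf
    simp only [e₀, e₁, ← Finset.smul_sum, hsq₀, hsq₁]

/-- scaling a pair of weight functions scales the classical f-divergence -/
lemma DfFinset_scale (f : ℝ → EReal) {k : ℕ} (p q : Fin k → ℝ) (hc : 0 < c) :
    ∑ x : Fin k, (if c * q x = 0 then zeroMulConv f (c * p x)
        else ((c * q x : ℝ) : EReal) * f ((c * p x) / (c * q x)))
      = (c : EReal) * DfFinset f Finset.univ p q := by
  rw [DfFinset, ereal_coe_mul_sum c hc.le]
  apply Finset.sum_congr rfl
  intro x _
  by_cases hqx : q x = 0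
  · rw [if_pos (by rw [hqx, mul_zero]), if_pos hqx, zeroMulConv_smul f c (p x) hc]
  · rw [if_neg (by exact mul_ne_zero hc.ne' hqx), if_neg hqx,
      mul_div_mul_left (p x) (q x) hc.ne', EReal.coe_mul, mul_assoc]

lemma DfFinset_combined (f : ℝ → EReal) (hc0 : 0 < c) (hc1 : c < 1) :
    DfFinset f Finset.univ
      (Fin.append (fun x => c * p₀ x) (fun x => (1 - c) * p₁ x))
      (Fin.append (fun x => c * q₀ x) (fun x => (1 - c) * q₁ x))
      = (c : EReal) * DfFinset f Finset.univ p₀ q₀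
        + ((1 - c : ℝ) : EReal) * DfFinset f Finset.univ p₁ q₁ := by
  rw [DfFinset, Fin.sum_univ_add]
  congr 1
  · rw [← DfFinset_scale c f p₀ q₀ hc0]
    apply Finset.sum_congr rfl
    intro i _
    rw [Fin.append_left, Fin.append_left]
  · rw [← DfFinset_scale (1-c) f p₁ q₁ (by linarith)]
    apply Finset.sum_congr rfl
    intro i _
    rw [Fin.append_right, Fin.append_right]

end combine

/-- joint convexity of `D_f^max`. -/
theorem stmt9 {n : ℕ} (f : ℝ → EReal) (hf : IsFC f)
    (ρ₀ ρ₁ σ₀ σ₁ : Matrix (Fin n) (Fin n) ℂ)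
    (hρ₀ : ρ₀.PosSemidef) (hρ₁ : ρ₁.PosSemidef) (hσ₀ : σ₀.PosSemidef) (hσ₁ : σ₁.PosSemidef)
    (c : ℝ) (hc0 : 0 ≤ c) (hc1 : c ≤ 1) :
    DfMax f ((c : ℂ) • ρ₀ + ((1 - c : ℝ) : ℂ) • ρ₁) ((c : ℂ) • σ₀ + ((1 - c : ℝ) : ℂ) • σ₁)
      ≤ (c : EReal) * DfMax f ρ₀ σ₀ + ((1 - c : ℝ) : EReal) * DfMax f ρ₁ σ₁ := by
  rcases eq_or_lt_of_le hc0 with rfl | hc0'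
  · norm_num
  rcases eq_or_lt_of_le hc1 with rfl | hc1'
  · norm_num
  -- now 0 < c < 1
  have hc1c : 0 < 1 - c := by linarith
  obtain ⟨a, b, hmin⟩ := affine_minorant f hf
  have hb₀ := DfMax_lower f hf hmin ρ₀ σ₀
  have hb₁ := DfMax_lower f hf hmin ρ₁ σ₁
  have hI₀bot : DfMax f ρ₀ σ₀ ≠ ⊥ := by
    intro h; rw [h] at hb₀; exact (EReal.coe_ne_bot _) (le_bot_iff.1 hb₀)
  have hI₁bot : DfMax f ρ₁ σ₁ ≠ ⊥ := by
    intro h; rw [h] at hb₁; exact (EReal.coe_ne_bot _) (le_bot_iff.1 hb₁)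
  -- key inequality for any pair of reverse tests
  have key : ∀ (k₀ : ℕ) (Γ₀ : Fin k₀ → Matrix (Fin n) (Fin n) ℂ) (p₀ q₀ : Fin k₀ → ℝ),
      IsReverseTest ρ₀ σ₀ Γ₀ p₀ q₀ →
      ∀ (k₁ : ℕ) (Γ₁ : Fin k₁ → Matrix (Fin n) (Fin n) ℂ) (p₁ q₁ : Fin k₁ → ℝ),
      IsReverseTest ρ₁ σ₁ Γ₁ p₁ q₁ →
      DfMax f ((c : ℂ) • ρ₀ + ((1 - c : ℝ) : ℂ) • ρ₁) ((c : ℂ) • σ₀ + ((1 - c : ℝ) : ℂ) • σ₁)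
        ≤ (c : EReal) * DfFinset f Finset.univ p₀ q₀
          + ((1 - c : ℝ) : EReal) * DfFinset f Finset.univ p₁ q₁ := by
    intro k₀ Γ₀ p₀ q₀ h₀ k₁ Γ₁ p₁ q₁ h₁
    rw [← DfFinset_combined p₀ q₀ p₁ q₁ c f hc0' hc1']
    refine iInf_le_of_le (k₀ + k₁) ?_
    refine iInf_le_of_le (Fin.append Γ₀ Γ₁) ?_
    refine iInf_le_of_le (Fin.append (fun x => c * p₀ x) (fun x => (1 - c) * p₁ x)) ?_
    refine iInf_le_of_le (Fin.append (fun x => c * q₀ x) (fun x => (1 - c) * q₁ x)) ?_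
    exact iInf_le _ (combined_isReverseTest Γ₀ Γ₁ p₀ q₀ p₁ q₁ c hc0 hc1 h₀ h₁)
  by_cases hI₀top : DfMax f ρ₀ σ₀ = ⊤
  · rw [hI₀top, EReal.coe_mul_top_of_pos hc0',
      EReal.top_add_of_ne_bot (ereal_coe_mul_ne_bot hc1c hI₁bot)]
    exact le_top
  by_cases hI₁top : DfMax f ρ₁ σ₁ = ⊤
  · rw [hI₁top, EReal.coe_mul_top_of_pos hc1c,
      EReal.add_top_of_ne_bot (ereal_coe_mul_ne_bot hc0' hI₀bot)]
    exact le_top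
  obtain ⟨r₀, hr₀⟩ : ∃ r : ℝ, DfMax f ρ₀ σ₀ = (r : EReal) :=
    ⟨(DfMax f ρ₀ σ₀).toReal, (EReal.coe_toReal hI₀top hI₀bot).symm⟩
  obtain ⟨r₁, hr₁⟩ : ∃ r : ℝ, DfMax f ρ₁ σ₁ = (r : EReal) :=
    ⟨(DfMax f ρ₁ σ₁).toReal, (EReal.coe_toReal hI₁top hI₁bot).symm⟩
  rw [hr₀, hr₁]
  by_contra hcon
  push_neg at hcon
  rw [← EReal.coe_mul, ← EReal.coe_mul, ← EReal.coe_add] at hcon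
  obtain ⟨s, hs1, hs2⟩ := EReal.exists_between_coe_real hcon
  set δ : ℝ := s - (c * r₀ + (1 - c) * r₁) with hδdef
  have hδ : 0 < δ := by
    have := EReal.coe_lt_coe_iff.1 hs1
    simp only [hδdef]; linarith
  have h₀' : DfMax f ρ₀ σ₀ < ((r₀ + δ : ℝ) : EReal) := by
    rw [hr₀]; exact EReal.coe_lt_coe_iff.2 (by linarith)
  have h₁' : DfMax f ρ₁ σ₁ < ((r₁ + δ : ℝ) : EReal) := by
    rw [hr₁]; exact EReal.coe_lt_coe_iff.2 (by linarith)
  simp only [DfMax, iInf_lt_iff] at h₀' h₁'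
  obtain ⟨k₀, Γ₀, p₀, q₀, h₀, hD₀⟩ := h₀'
  obtain ⟨k₁, Γ₁, p₁, q₁, h₁, hD₁⟩ := h₁'
  have hle := key k₀ Γ₀ p₀ q₀ h₀ k₁ Γ₁ p₁ q₁ h₁
  have hbound : (c : EReal) * DfFinset f Finset.univ p₀ q₀
      + ((1 - c : ℝ) : EReal) * DfFinset f Finset.univ p₁ q₁ ≤ (s : EReal) := by
    have m₀ := mul_le_mul_of_nonneg_left hD₀.le (EReal.coe_nonneg.2 hc0)
    have m₁ := mul_le_mul_of_nonneg_left hD₁.le (EReal.coe_nonneg.2 (by linarith : (0:ℝ) ≤ 1 - c))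
    calc (c : EReal) * DfFinset f Finset.univ p₀ q₀
        + ((1 - c : ℝ) : EReal) * DfFinset f Finset.univ p₁ q₁
        ≤ (c : EReal) * ((r₀ + δ : ℝ) : EReal)
          + ((1 - c : ℝ) : EReal) * ((r₁ + δ : ℝ) : EReal) := add_le_add m₀ m₁
      _ = ((c * (r₀ + δ) + (1 - c) * (r₁ + δ) : ℝ) : EReal) := by
          rw [← EReal.coe_mul, ← EReal.coe_mul, ← EReal.coe_add]
      _ = (s : EReal) := by
          congr 1
          simp only [hδdef]; ring
  exact absurd (hle.trans hbound) (not_le.2 hs2)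

end
end

section
/- Let f satisfy condition (FC). For positive semidefinite matrices ρ, σ, X with X ≥ σ in the Loewner order, D_f^max(ρ||X) ≤ D_f^max(ρ||σ). -/
open Matrix Filter MeasureTheory
open scoped Topology Classical ComplexOrder

noncomputable section

lemma psdTraceAux {n : ℕ} {Δ : Matrix (Fin n) (Fin n) ℂ} (h : Δ.PosSemidef) :
    0 ≤ Δ.trace.re ∧ Δ.trace = (Δ.trace.re : ℂ) ∧ (Δ.trace.re = 0 → Δ = 0) := by
  obtain ⟨B, rfl⟩ : ∃ B : Matrix (Fin n) (Fin n) ℂ, Δ = Bᴴ * B := by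
    open scoped MatrixOrder in
    obtain ⟨B, hB⟩ := CStarAlgebra.nonneg_iff_eq_star_mul_self.mp h.nonneg
    exact ⟨B, hB⟩
  have htr : (Bᴴ * B).trace = ((∑ i, ∑ j, Complex.normSq (B j i) : ℝ) : ℂ) := by
    simp only [Matrix.trace, Matrix.diag, Matrix.mul_apply, Matrix.conjTranspose_apply]
    push_cast
    congr 1
    ext i
    congr 1
    ext j
    exact (Complex.normSq_eq_conj_mul_self).symm
  have hre : (Bᴴ * B).trace.re = ∑ i, ∑ j, Complex.normSq (B j i) := by
    rw [htr]; exact Complex.ofReal_re _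
  have hnn : 0 ≤ ∑ i, ∑ j, Complex.normSq (B j i) :=
    Finset.sum_nonneg fun i _ => Finset.sum_nonneg fun j _ => Complex.normSq_nonneg _
  refine ⟨hre ▸ hnn, by rw [hre, htr], fun h0 => ?_⟩
  rw [hre] at h0
  have hB : B = 0 := by
    ext j i
    have h1 : ∀ i ∈ Finset.univ, (0:ℝ) ≤ ∑ j, Complex.normSq (B j i) :=
      fun i _ => Finset.sum_nonneg fun j _ => Complex.normSq_nonneg _
    have h2 := (Finset.sum_eq_zero_iff_of_nonneg h1).mp h0 i (Finset.mem_univ i)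
    have h3 := (Finset.sum_eq_zero_iff_of_nonneg
      (fun j _ => Complex.normSq_nonneg (B j i))).mp h2 j (Finset.mem_univ j)
    simpa using Complex.normSq_eq_zero.mp h3
  rw [hB]; simp

lemma psdSmulAux {n : ℕ} {A : Matrix (Fin n) (Fin n) ℂ} (h : A.PosSemidef) {c : ℝ}
    (hc : 0 ≤ c) : ((c : ℂ) • A).PosSemidef := by
  refine ⟨?_, fun x => ?_⟩
  · unfold Matrix.IsHermitian
    rw [Matrix.conjTranspose_smul, h.1.eq]
    congr 1
    simp [Complex.star_def, Complex.conj_ofReal]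
  · exact (h.smul (Complex.zero_le_real.mpr hc)).2 x

/-- `D_f^max(ρ‖·)` is antitone in the second argument in the Loewner
order. -/
theorem stmt10 {n : ℕ} (f : ℝ → EReal) (hf : IsFC f)
    (ρ σ X : Matrix (Fin n) (Fin n) ℂ)
    (hρ : ρ.PosSemidef) (hσ : σ.PosSemidef) (hX : X.PosSemidef)
    (hle : LoewnerLE σ X) :
    DfMax f ρ X ≤ DfMax f ρ σ := by
  simp only [DfMax]
  refine le_iInf fun k => le_iInf fun Γ => le_iInf fun p => le_iInf fun q =>
    le_iInf fun hrt => ?_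
  obtain ⟨hΓps, hΓtr, hp, hq, hpsum, hqsum⟩ := hrt
  have hΔ : (X - σ).PosSemidef := hle
  obtain ⟨htnn, htre, hzero⟩ := psdTraceAux hΔ
  set t : ℝ := (X - σ).trace.re with ht
  by_cases h0 : t = 0
  · have hXσ : X = σ := sub_eq_zero.mp (hzero h0)
    subst hXσ
    exact iInf_le_of_le k (iInf_le_of_le Γ (iInf_le_of_le p (iInf_le_of_le q
      (iInf_le _ ⟨hΓps, hΓtr, hp, hq, hpsum, hqsum⟩))))
  · have htpos : 0 < t := lt_of_le_of_ne htnn (Ne.symm h0)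
    have htC : ((X - σ).trace) = (t : ℂ) := htre
    have htne : (t : ℂ) ≠ 0 := Complex.ofReal_ne_zero.mpr h0
    set Γ' : Fin (k+1) → Matrix (Fin n) (Fin n) ℂ :=
      Fin.snoc Γ (((t : ℂ))⁻¹ • (X - σ)) with hΓ'
    set p' : Fin (k+1) → ℝ := Fin.snoc p 0 with hp'
    set q' : Fin (k+1) → ℝ := Fin.snoc q t with hq'
    have hΓlast : Γ' (Fin.last k) = ((t : ℂ))⁻¹ • (X - σ) := Fin.snoc_last _ _
    have hrt' : IsReverseTest ρ X Γ' p' q' := by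
      refine ⟨?_, ?_, ?_, ?_, ?_, ?_⟩
      · intro x
        refine Fin.lastCases ?_ (fun i => ?_) x
        · rw [hΓlast]
          have : ((t : ℂ))⁻¹ = ((t⁻¹ : ℝ) : ℂ) := by push_cast; ring
          rw [this]
          exact psdSmulAux hΔ (inv_nonneg.mpr htnn)
        · simpa [hΓ', Fin.snoc_castSucc] using hΓps i
      · intro x
        refine Fin.lastCases ?_ (fun i => ?_) x
        · rw [hΓlast, Matrix.trace_smul, htC, smul_eq_mul, inv_mul_cancel₀ htne]
        · simpa [hΓ', Fin.snoc_castSucc] using hΓtr i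
      · intro x
        refine Fin.lastCases ?_ (fun i => ?_) x
        · simp [hp']
        · simpa [hp', Fin.snoc_castSucc] using hp i
      · intro x
        refine Fin.lastCases ?_ (fun i => ?_) x
        · simpa [hq'] using htnn
        · simpa [hq', Fin.snoc_castSucc] using hq i
      · rw [Fin.sum_univ_castSucc]
        simp only [hΓ', hp', Fin.snoc_castSucc, Fin.snoc_last]
        simp only [Complex.ofReal_zero, zero_smul, add_zero]
        exact hpsum
      · rw [Fin.sum_univ_castSucc]
        simp only [hΓ', hq', Fin.snoc_castSucc, Fin.snoc_last]
        rw [smul_smul, mul_inv_cancel₀ htne, one_smul, hqsum]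
        abel
    have hcalc : DfFinset f Finset.univ p' q' = DfFinset f Finset.univ p q := by
      unfold DfFinset
      rw [Fin.sum_univ_castSucc]
      simp only [hΓ', hp', hq', Fin.snoc_castSucc, Fin.snoc_last]
      rw [if_neg h0, zero_div, hf.zero, mul_zero, add_zero]
    calc DfMax f ρ X ≤ DfFinset f Finset.univ p' q' :=
          iInf_le_of_le (k+1) (iInf_le_of_le Γ' (iInf_le_of_le p' (iInf_le_of_le q'
            (iInf_le _ hrt'))))
      _ = DfFinset f Finset.univ p q := hcalc


end
end
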